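/- arXiv:2507.09689 — 2 statements merged into one kernel-verified Lean document; each statement's English description precedes it below -/
import Mathlib

section
/- For every odd m ≥ 1, the identity Z_{2m} = Z_m · (Z_m).comp (4 − X) holds in ℤ[X]; equivalently Z_{2m}(x) = Z_m(x)·Z_m(4 − x). -/
open Polynomial

/-- Lucas-type polynomials: `l 0 = 2`, `l 1 = X`, `l n = X * l (n-1) - l (n-2)`. -/
noncomputable def lucPoly : ℕ → ℤ[X]
  | 0 => 2
  | 1 => X
  | (n + 2) => X * lucPoly (n + 1) - lucPoly n

/-- Herbig's variant of the spread polynomials: `Z n = 2 - lₙ(2 - X)`. -/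
noncomputable def Zpoly (n : ℕ) : ℤ[X] := 2 - (lucPoly n).comp (2 - X)

lemma lucPoly_eq_dickson : ∀ n, lucPoly n = dickson 1 1 n := by
  intro n
  induction n using Nat.strong_induction_on with
  | _ n ih =>
    match n with
    | 0 => simp [lucPoly, dickson_zero]; norm_num
    | 1 => simp [lucPoly, dickson_one]
    | (k + 2) =>
      rw [lucPoly, dickson_add_two, ih k (by omega), ih (k+1) (by omega)]
      simp

lemma lucPoly_two_mul (m : ℕ) : lucPoly (2 * m) = lucPoly m ^ 2 - 2 := by
  rw [lucPoly_eq_dickson, lucPoly_eq_dickson, dickson_one_one_mul, dickson_two]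
  simp [sub_comp]
  norm_num

lemma lucPoly_parity : ∀ n, (lucPoly n).comp (-X) = (-1 : ℤ[X]) ^ n * lucPoly n := by
  intro n
  induction n using Nat.strong_induction_on with
  | _ n ih =>
    match n with
    | 0 => simp [lucPoly]
    | 1 => simp [lucPoly]
    | (k + 2) =>
      rw [lucPoly, sub_comp, mul_comp, X_comp, ih k (by omega), ih (k+1) (by omega)]
      ring

theorem Zpoly_two_mul_odd (m : ℕ) (hm : 1 ≤ m) (hodd : Odd m) :
    Zpoly (2 * m) = Zpoly m * (Zpoly m).comp (4 - X) := by
  have h1 : ((lucPoly m).comp (2 - X)).comp (4 - X) = -(lucPoly m).comp (2 - X) := by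
    rw [comp_assoc]
    have h2 : (2 - X : ℤ[X]).comp (4 - X) = (-X : ℤ[X]).comp (2 - X) := by
      simp [sub_comp]; ring
    rw [h2, ← comp_assoc, lucPoly_parity, hodd.neg_one_pow]
    simp
  simp only [Zpoly, lucPoly_two_mul, sub_comp, pow_comp, h1]
  ring_nf
  simp [sub_comp]
  ring
end

section
/- The spread polynomials form a strong divisibility sequence: for all m, n ≥ 1, in ℚ[X] the greatest common divisor of Z_m and Z_n is associated to Z_{gcd(m,n)}. In particular, if m divides n then Z_m divides Z_n in ℤ[X]. -/
open Polynomial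

/-!
Writing `2 - X = t + t⁻¹`, the Chebyshev relation `Cₙ(t + t⁻¹) = tⁿ + t⁻ⁿ` gives
`Zₙ = -(tⁿ - 1)² / tⁿ`, so the `Zₙ` behave like squares of a strong divisibility sequence.
Concretely `Z_{a+b} Z_{|a-b|} = (Z_a - Z_b)²`, and this identity drives one step of the
subtractive Euclidean algorithm: if `g = Z_{gcd(a,b)}` is the gcd of `Z_a` and `Z_b`,
`gcd(Z_{a+b}, Z_b) = g E` and `Z_a - Z_b = g D`, then `Z_{|a-b|}` supplies the missing factor
`g` to show `E ∣ D²`, while a common factor of `E` and `D` would enlarge `gcd(Z_a, Z_b)`;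
so `E` is a unit.
-/

section GCDDomain

variable {R : Type*} [CommRing R] [IsDomain R] [GCDMonoid R]

theorem associated_gcd_of_mul_eq_sq {M N A C g : R} (hgM : g ∣ M) (hgC : g ∣ C)
    (hA : Associated (gcd A N) g) (hsq : M * C = (A - N) ^ 2) :
    Associated (gcd M N) g := by
  have hgA : g ∣ A := hA.symm.dvd.trans (gcd_dvd_left A N)
  have hgN : g ∣ N := hA.symm.dvd.trans (gcd_dvd_right A N)
  obtain ⟨E, hE⟩ : g ∣ gcd M N := dvd_gcd hgM hgN
  rcases eq_or_ne g 0 with rfl | hg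
  · rw [hE, zero_mul]
  obtain ⟨D, hD⟩ : g ∣ A - N := dvd_sub hgA hgN
  have hED : E ∣ D * D := by
    rw [← mul_dvd_mul_iff_left (mul_ne_zero hg hg)]
    calc g * g * E = gcd M N * g := by rw [hE]; ring
      _ ∣ M * C := mul_dvd_mul (gcd_dvd_left M N) hgC
      _ = g * g * (D * D) := by rw [hsq, hD]; ring
  have hcop : IsRelPrime E D := by
    intro d hdE hdD
    have hdgN : g * d ∣ N := (hE ▸ mul_dvd_mul_left g hdE).trans (gcd_dvd_right M N)
    have hdgA : g * d ∣ A := by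
      simpa using dvd_add (hD ▸ mul_dvd_mul_left g hdD : g * d ∣ A - N) hdgN
    have hdg : g * d ∣ g * 1 := by
      rw [mul_one]; exact (dvd_gcd hdgA hdgN).trans hA.dvd
    exact isUnit_of_dvd_one ((mul_dvd_mul_iff_left hg).mp hdg)
  rw [hE]
  exact associated_mul_unit_left g E (hcop.isUnit_of_dvd (hcop.dvd_of_dvd_mul_left hED))

variable {f : ℕ → R} (hdvd : ∀ m n, m ∣ n → f m ∣ f n)
  (hsq : ∀ a b, f (a + 2 * b) * f a = (f (a + b) - f b) ^ 2)
include hdvd hsq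

theorem associated_gcd_add_self_left {a n : ℕ}
    (h : Associated (gcd (f a) (f n)) (f (Nat.gcd a n))) :
    Associated (gcd (f (a + n)) (f n)) (f (Nat.gcd (a + n) n)) := by
  rw [Nat.gcd_add_self_left]
  obtain ⟨c, hc, hsq_c⟩ : ∃ c, Nat.gcd a n ∣ c ∧ f (a + n) * f c = (f a - f n) ^ 2 := by
    rcases le_total n a with hna | han
    · refine ⟨a - n, Nat.dvd_sub (Nat.gcd_dvd_left a n) (Nat.gcd_dvd_right a n), ?_⟩
      simpa [show a - n + 2 * n = a + n by omega, Nat.sub_add_cancel hna] using hsq (a - n) n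
    · refine ⟨n - a, Nat.dvd_sub (Nat.gcd_dvd_right a n) (Nat.gcd_dvd_left a n), ?_⟩
      rw [sub_sq_comm]
      simpa [show n - a + 2 * a = a + n by omega, Nat.sub_add_cancel han] using hsq (n - a) a
  refine associated_gcd_of_mul_eq_sq (hdvd _ _ ?_) (hdvd _ _ hc) h hsq_c
  exact Nat.dvd_add (Nat.gcd_dvd_left a n) (Nat.gcd_dvd_right a n)

theorem associated_gcd_of_dvd_of_mul_eq_sq (m n : ℕ) :
    Associated (gcd (f m) (f n)) (f (Nat.gcd m n)) := by
  have base (k : ℕ) : Associated (gcd (f k) (f 0)) (f (Nat.gcd k 0)) := by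
    rw [Nat.gcd_zero_right]
    exact associated_of_dvd_dvd (gcd_dvd_left _ _) (dvd_gcd dvd_rfl (hdvd k 0 (dvd_zero k)))
  have swap {k l : ℕ} (h : Associated (gcd (f k) (f l)) (f (Nat.gcd k l))) :
      Associated (gcd (f l) (f k)) (f (Nat.gcd l k)) := by
    rw [Nat.gcd_comm]; exact (gcd_comm' _ _).trans h
  induction hs : m + n using Nat.strong_induction_on generalizing m n with
  | _ s ih =>
    rcases Nat.eq_zero_or_pos n with rfl | hn
    · exact base m
    rcases Nat.eq_zero_or_pos m with rfl | hm
    · exact swap (base n)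
    rcases le_total n m with hnm | hmn
    · obtain ⟨a, rfl⟩ := Nat.exists_eq_add_of_le' hnm
      exact associated_gcd_add_self_left hdvd hsq (ih (a + n) (by omega) a n rfl)
    · obtain ⟨a, rfl⟩ := Nat.exists_eq_add_of_le' hmn
      exact swap (associated_gcd_add_self_left hdvd hsq (ih (a + m) (by omega) a m rfl))

end GCDDomain

namespace Polynomial.Chebyshev

theorem two_sub_C_add_mul_two_sub_C_sub (R : Type*) [CommRing R] (m k : ℤ) :
    (2 - C R (m + k)) * (2 - C R (m - k)) = (C R m - C R k) ^ 2 := by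
  have hmk := C_mul_C R (m + k) (m - k)
  rw [show m + k + (m - k) = m + m by ring, show m + k - (m - k) = k + k by ring] at hmk
  have hm := C_mul_C R m m
  have hk := C_mul_C R k k
  rw [sub_self, C_zero] at hm hk
  linear_combination hmk - hm - hk + 2 * C_mul_C R m k

end Polynomial.Chebyshev

theorem lucPoly_eq_chebyshev_C : ∀ n : ℕ, lucPoly n = Chebyshev.C ℤ n
  | 0 => by simp [lucPoly]
  | 1 => by simp [lucPoly]
  | n + 2 => by
    rw [lucPoly, lucPoly_eq_chebyshev_C n, lucPoly_eq_chebyshev_C (n + 1)]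
    push_cast
    rw [Chebyshev.C_add_two]

theorem Zpoly_eq_comp (n : ℕ) : Zpoly n = (2 - Chebyshev.C ℤ n).comp (2 - X) := by
  simp [Zpoly, lucPoly_eq_chebyshev_C, sub_comp]

theorem Zpoly_add_two_mul_mul (a b : ℕ) :
    Zpoly (a + 2 * b) * Zpoly a = (Zpoly (a + b) - Zpoly b) ^ 2 := by
  have key : (2 - Chebyshev.C ℤ ↑(a + 2 * b)) * (2 - Chebyshev.C ℤ ↑a) =
      ((2 - Chebyshev.C ℤ ↑(a + b)) - (2 - Chebyshev.C ℤ ↑b)) ^ 2 := by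
    have h := Chebyshev.two_sub_C_add_mul_two_sub_C_sub ℤ (a + b : ℕ) b
    push_cast at h ⊢
    rw [show (a : ℤ) + b + b = a + 2 * b by ring, add_sub_cancel_right] at h
    linear_combination h
  simp only [Zpoly_eq_comp, ← mul_comp, ← sub_comp, ← pow_comp, key]

theorem Zpoly_dvd_Zpoly {m n : ℕ} (h : m ∣ n) : Zpoly m ∣ Zpoly n := by
  obtain ⟨k, rfl⟩ := h
  have hk : (2 - X : ℤ[X]) ∣ 2 - Chebyshev.C ℤ k := by
    have h := X_sub_C_dvd_sub_C_eval (a := (2 : ℤ)) (p := Chebyshev.C ℤ k)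
    rw [Chebyshev.C_eval_two, map_ofNat] at h
    rw [← neg_sub X, neg_dvd, dvd_sub_comm]
    exact h
  rw [Zpoly_eq_comp, Zpoly_eq_comp, Nat.cast_mul, mul_comm, Chebyshev.C_mul]
  simpa [sub_comp, comp_assoc] using map_dvd (compRingHom ((Chebyshev.C ℤ m).comp (2 - X))) hk

theorem Zpoly_strong_divisibility_general (m n : ℕ) :
    Associated
      (gcd ((Zpoly m).map (Int.castRingHom ℚ)) ((Zpoly n).map (Int.castRingHom ℚ)))
      ((Zpoly (Nat.gcd m n)).map (Int.castRingHom ℚ)) ∧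
    (m ∣ n → Zpoly m ∣ Zpoly n) := by
  refine ⟨associated_gcd_of_dvd_of_mul_eq_sq (f := fun k ↦ (Zpoly k).map (Int.castRingHom ℚ))
    (fun a b h ↦ Polynomial.map_dvd _ (Zpoly_dvd_Zpoly h)) (fun a b ↦ ?_) m n, Zpoly_dvd_Zpoly⟩
  simpa only [Polynomial.map_mul, Polynomial.map_sub, Polynomial.map_pow] using
    congrArg (Polynomial.map (Int.castRingHom ℚ)) (Zpoly_add_two_mul_mul a b)

theorem Zpoly_strong_divisibility (m n : ℕ) (hm : 1 ≤ m) (hn : 1 ≤ n) :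
    Associated
      (gcd ((Zpoly m).map (Int.castRingHom ℚ)) ((Zpoly n).map (Int.castRingHom ℚ)))
      ((Zpoly (Nat.gcd m n)).map (Int.castRingHom ℚ)) ∧
    (m ∣ n → Zpoly m ∣ Zpoly n) :=
  Zpoly_strong_divisibility_general m n
end
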